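/- Let t be a normal λ-term, v a closed λ-term, and α, x two variables. If t[λx₁…λxₙ.α / x] →β v, then x ∉ Fv(t). -/
import Mathlib


/-!
Common development: pure λ-calculus in de Bruijn notation, β-reduction,
weak head reduction, types of system F (with type constants), the typing
systems F, F₀ (F without (∀e)) and the simple system S, saturated sets and
interpretations, and the notions of input / output / data types, following
Farkh-Nour, "Les types de données syntaxiques du système F".
-/

namespace FarkhNour

/-- Pure λ-terms, in de Bruijn notation. -/
inductive Trm : Type
  | var : ℕ → Trm
  | app : Trm → Trm → Trm
  | lam : Trm → Trm

/-- Lift (shift) by `d` the free variables of a term, starting at index `k`. -/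
def liftTrm (d : ℕ) : ℕ → Trm → Trm
  | k, .var n => if n < k then .var n else .var (n + d)
  | k, .app a b => .app (liftTrm d k a) (liftTrm d k b)
  | k, .lam a => .lam (liftTrm d (k + 1) a)

/-- β-substitution `t[u/k]` (the binder for `k` is consumed: variables above `k`
are decremented), as used in the β-reduction rule. -/
def substTrm : Trm → ℕ → Trm → Trm
  | .var n, k, u => if n < k then .var n else if n = k then liftTrm k 0 u else .var (n - 1)
  | .app a b, k, u => .app (substTrm a k u) (substTrm b k u)
  | .lam a, k, u => .lam (substTrm a (k + 1) u)

/-- Named-style capture-avoiding substitution `t[u/x]` of the term `u` for the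
free variable `x` of `t` : the other free variables are left unchanged. -/
def replaceVar : Trm → ℕ → Trm → Trm
  | .var n, k, u => if n = k then u else .var n
  | .app a b, k, u => .app (replaceVar a k u) (replaceVar b k u)
  | .lam a, k, u => .lam (replaceVar a (k + 1) (liftTrm 1 0 u))

/-- Lifting of a parallel substitution under a binder. -/
def liftSub (σ : ℕ → Trm) : ℕ → Trm
  | 0 => .var 0
  | n + 1 => liftTrm 1 0 (σ n)

/-- Simultaneous (parallel) capture-avoiding substitution. -/
def msubst (σ : ℕ → Trm) : Trm → Trm
  | .var n => σ n
  | .app a b => .app (msubst σ a) (msubst σ b)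
  | .lam a => .lam (msubst (liftSub σ) a)

/-- One step of β-reduction. -/
inductive BetaStep : Trm → Trm → Prop
  | beta (t u : Trm) : BetaStep (.app (.lam t) u) (substTrm t 0 u)
  | appL {t t' : Trm} (u : Trm) : BetaStep t t' → BetaStep (.app t u) (.app t' u)
  | appR (t : Trm) {u u' : Trm} : BetaStep u u' → BetaStep (.app t u) (.app t u')
  | lam {t t' : Trm} : BetaStep t t' → BetaStep (.lam t) (.lam t')

/-- Many-step β-reduction `t →β t'`. -/
def BetaRed : Trm → Trm → Prop := Relation.ReflTransGen BetaStep

/-- β-equivalence `t ≃β t'`. -/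
def BetaEq : Trm → Trm → Prop := Relation.EqvGen BetaStep

/-- A term is normal iff no β-reduction step applies to it. -/
def IsNormal (t : Trm) : Prop := ∀ u, ¬ BetaStep t u

/-- `FreeIn k t` : the variable (de Bruijn index) `k` occurs free in `t`. -/
def FreeIn : ℕ → Trm → Prop
  | k, .var n => n = k
  | k, .app a b => FreeIn k a ∨ FreeIn k b
  | k, .lam a => FreeIn (k + 1) a

/-- A closed term. -/
def TrmClosed (t : Trm) : Prop := ∀ k, ¬ FreeIn k t

/-- One step of weak head reduction. -/
inductive WHStep : Trm → Trm → Prop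
  | beta (t u : Trm) : WHStep (.app (.lam t) u) (substTrm t 0 u)
  | app {t t' : Trm} (u : Trm) : WHStep t t' → WHStep (.app t u) (.app t' u)

/-- Weak head reduction `t ≻_f t'`. -/
def WHRed : Trm → Trm → Prop := Relation.ReflTransGen WHStep

/-- Types of system F, in de Bruijn notation, with type constants
(the constant `0` is the distinguished constant `O`, the constant `1` is `⊥`). -/
inductive Ty : Type
  | var : ℕ → Ty
  | const : ℕ → Ty
  | arr : Ty → Ty → Ty
  | all : Ty → Ty

/-- The distinguished type constant `O`. -/
def tyO : Ty := .const 0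

/-- The distinguished type constant `⊥`. -/
def tyBot : Ty := .const 1

/-- Lift (shift) by `d` the free type variables, starting at index `k`. -/
def liftTy (d : ℕ) : ℕ → Ty → Ty
  | k, .var n => if n < k then .var n else .var (n + d)
  | _, .const c => .const c
  | k, .arr a b => .arr (liftTy d k a) (liftTy d k b)
  | k, .all a => .all (liftTy d (k + 1) a)

/-- Capture-avoiding type substitution `A[G/k]`. -/
def substTy : Ty → ℕ → Ty → Ty
  | .var n, k, G => if n < k then .var n else if n = k then liftTy k 0 G else .var (n - 1)
  | .const c, _, _ => .const c
  | .arr a b, k, G => .arr (substTy a k G) (substTy b k G)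
  | .all a, k, G => .all (substTy a (k + 1) G)

/-- `TyFreeIn k A` : the type variable `k` occurs free in `A`. -/
def TyFreeIn : ℕ → Ty → Prop
  | k, .var n => n = k
  | _, .const _ => False
  | k, .arr a b => TyFreeIn k a ∨ TyFreeIn k b
  | k, .all a => TyFreeIn (k + 1) a

/-- Boolean version of `TyFreeIn`. -/
def tyFreeInB : ℕ → Ty → Bool
  | k, .var n => n == k
  | _, .const _ => false
  | k, .arr a b => tyFreeInB k a || tyFreeInB k b
  | k, .all a => tyFreeInB (k + 1) a

/-- A closed type. -/
def TyClosed (A : Ty) : Prop := ∀ k, ¬ TyFreeIn k A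

/-- `ContainsConst c A` : the type constant `c` occurs in `A`. -/
def ContainsConst : ℕ → Ty → Prop
  | _, .var _ => False
  | c, .const c' => c' = c
  | c, .arr a b => ContainsConst c a ∨ ContainsConst c b
  | c, .all a => ContainsConst c a

/-- The typing judgment `Γ ⊢_F t : A` of system F, with rules
(ax), (→i), (→e), (∀i), (∀e). -/
inductive TypF : List Ty → Trm → Ty → Prop
  | var (Γ : List Ty) (n : ℕ) (A : Ty) : Γ[n]? = some A → TypF Γ (.var n) A
  | abs {Γ : List Ty} {t : Trm} {B C : Ty} :
      TypF (B :: Γ) t C → TypF Γ (.lam t) (.arr B C)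
  | app {Γ : List Ty} {u v : Trm} {B C : Ty} :
      TypF Γ u (.arr B C) → TypF Γ v B → TypF Γ (.app u v) C
  | allI {Γ : List Ty} {t : Trm} {A : Ty} :
      TypF (Γ.map (liftTy 1 0)) t A → TypF Γ t (.all A)
  | allE {Γ : List Ty} {t : Trm} {A : Ty} (G : Ty) :
      TypF Γ t (.all A) → TypF Γ t (substTy A 0 G)

/-- The typing judgment `Γ ⊢_{F₀} t : A` of system F₀, i.e. system F
without the rule (∀e). -/
inductive TypF0 : List Ty → Trm → Ty → Prop
  | var (Γ : List Ty) (n : ℕ) (A : Ty) : Γ[n]? = some A → TypF0 Γ (.var n) A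
  | abs {Γ : List Ty} {t : Trm} {B C : Ty} :
      TypF0 (B :: Γ) t C → TypF0 Γ (.lam t) (.arr B C)
  | app {Γ : List Ty} {u v : Trm} {B C : Ty} :
      TypF0 Γ u (.arr B C) → TypF0 Γ v B → TypF0 Γ (.app u v) C
  | allI {Γ : List Ty} {t : Trm} {A : Ty} :
      TypF0 (Γ.map (liftTy 1 0)) t A → TypF0 Γ t (.all A)

/-- The typing judgment `Γ ⊢_S t : A` of the simple type system S,
with rules (ax), (→i), (→e) only. -/
inductive TypS : List Ty → Trm → Ty → Prop
  | var (Γ : List Ty) (n : ℕ) (A : Ty) : Γ[n]? = some A → TypS Γ (.var n) A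
  | abs {Γ : List Ty} {t : Trm} {B C : Ty} :
      TypS (B :: Γ) t C → TypS Γ (.lam t) (.arr B C)
  | app {Γ : List Ty} {u v : Trm} {B C : Ty} :
      TypS Γ u (.arr B C) → TypS Γ v B → TypS Γ (.app u v) C

/-- Quantifier-free types (types of the simple type system S). -/
def QFree : Ty → Prop
  | .var _ => True
  | .const _ => True
  | .arr a b => QFree a ∧ QFree b
  | .all _ => False

/-- An input type : a closed type all of whose normal inhabitants are
typable in system F₀. -/
def IsInputType (E : Ty) : Prop :=
  TyClosed E ∧ ∀ t : Trm, IsNormal t → TypF [] t E → TypF0 [] t E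

/-- An output type : a closed type `S` not containing the constant `O` such
that for every normal term `t`, if `α : O ⊢_F t : S` then `α ∉ Fv(t)`. -/
def IsOutputType (S : Ty) : Prop :=
  TyClosed S ∧ ¬ ContainsConst 0 S ∧
    ∀ t : Trm, IsNormal t → TypF [tyO] t S → ¬ FreeIn 0 t

/-- A syntactical data type : a closed type which is both input and output. -/
def IsSyntacticalDataType (D : Ty) : Prop := IsInputType D ∧ IsOutputType D

mutual
  /-- The ∀⁺ types (positive quantifiers). -/
  inductive PosTy : Ty → Prop
    | var (n : ℕ) : PosTy (.var n)
    | arr {B A : Ty} : NegTy B → PosTy A → PosTy (.arr B A)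
    | all {A : Ty} : PosTy A → TyFreeIn 0 A → PosTy (.all A)
  /-- The ∀⁻ types (negative quantifiers). -/
  inductive NegTy : Ty → Prop
    | var (n : ℕ) : NegTy (.var n)
    | arr {B A : Ty} : PosTy B → NegTy A → NegTy (.arr B A)
end

/-- `EndsInConst c A` : the type `A` ends in the type constant `c`. -/
inductive EndsInConst : ℕ → Ty → Prop
  | base (c : ℕ) : EndsInConst c (.const c)
  | arr {c : ℕ} {A : Ty} (B : Ty) : EndsInConst c A → EndsInConst c (.arr B A)
  | all {c : ℕ} {A : Ty} : EndsInConst c A → EndsInConst c (.all A)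

/-- `EndsInVar k A` : the type `A` ends in the type variable `k`
(crossing a quantifier ∀X with X ≠ the variable is allowed). -/
inductive EndsInVar : ℕ → Ty → Prop
  | base (k : ℕ) : EndsInVar k (.var k)
  | arr {k : ℕ} {A : Ty} (B : Ty) : EndsInVar k A → EndsInVar k (.arr B A)
  | all {k : ℕ} {A : Ty} : EndsInVar (k + 1) A → EndsInVar k (.all A)

/-- The side condition of the restricted rule (∀e)_F : the body `A` of `∀X A`
(the variable X having index `k`) is of the form
`∀X₀(A₁ → ∀X₁(A₂ → … → ∀X_{n-1}(A_n → ∀X_n Y)…))` with `Y = X` or one of the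
`A_i` ending in `X`. -/
inductive FFForm : ℕ → Ty → Prop
  | base (k : ℕ) : FFForm k (.var k)
  | all {k : ℕ} {A : Ty} : FFForm (k + 1) A → FFForm k (.all A)
  | arrTail {k : ℕ} {C : Ty} (B : Ty) : FFForm k C → FFForm k (.arr B C)
  | arrHit {k : ℕ} {B C : Ty} : EndsInVar k B → (∃ j, EndsInVar j C) →
      FFForm k (.arr B C)

/-- The typing judgment of system F_F : system F where the rule (∀e) is
replaced by the restricted rule (∀e)_F. -/
inductive TypFF : List Ty → Trm → Ty → Prop
  | var (Γ : List Ty) (n : ℕ) (A : Ty) : Γ[n]? = some A → TypFF Γ (.var n) A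
  | abs {Γ : List Ty} {t : Trm} {B C : Ty} :
      TypFF (B :: Γ) t C → TypFF Γ (.lam t) (.arr B C)
  | app {Γ : List Ty} {u v : Trm} {B C : Ty} :
      TypFF Γ u (.arr B C) → TypFF Γ v B → TypFF Γ (.app u v) C
  | allI {Γ : List Ty} {t : Trm} {A : Ty} :
      TypFF (Γ.map (liftTy 1 0)) t A → TypFF Γ t (.all A)
  | allE {Γ : List Ty} {t : Trm} {A : Ty} (G : Ty) :
      FFForm 0 A → TypFF Γ t (.all A) → TypFF Γ t (substTy A 0 G)

/-- An output type of system F_F. -/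
def IsOutputTypeFF (S : Ty) : Prop :=
  TyClosed S ∧ ¬ ContainsConst 0 S ∧
    ∀ t : Trm, IsNormal t → TypFF [tyO] t S → ¬ FreeIn 0 t

/-- Saturated sets of λ-terms. -/
def Saturated (G : Set Trm) : Prop := ∀ t u : Trm, WHRed t u → u ∈ G → t ∈ G

/-- `G → G'` on sets of λ-terms. -/
def SetArr (G G' : Set Trm) : Set Trm := {u : Trm | ∀ t ∈ G, Trm.app u t ∈ G'}

/-- Extension of an interpretation by a set for the (de Bruijn) variable 0. -/
def consEnv (G : Set Trm) (I : ℕ → Set Trm) : ℕ → Set Trm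
  | 0 => G
  | n + 1 => I n

/-- The value `|A|_I` of a type in an interpretation (`C` interprets the
type constants, `I` the type variables). -/
def TyVal (C : ℕ → Set Trm) : Ty → (ℕ → Set Trm) → Set Trm
  | .var n, I => I n
  | .const c, _ => C c
  | .arr a b, I => SetArr (TyVal C a I) (TyVal C b I)
  | .all a, I => {t : Trm | ∀ G : Set Trm, Saturated G → t ∈ TyVal C a (consEnv G I)}

/-- `|A|` : the intersection of the values of `A` under all interpretations
by saturated sets. -/
def TyGlobal (A : Ty) : Set Trm :=
  {t : Trm | ∀ C I : ℕ → Set Trm, (∀ c, Saturated (C c)) → (∀ n, Saturated (I n)) →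
    t ∈ TyVal C A I}

/-- A data type in Krivine's sense : a closed type `A` with `|A| ≠ ∅` such that
every term of `|A|` β-reduces to a closed term. -/
def IsDataType (A : Ty) : Prop :=
  TyClosed A ∧ TyGlobal A ≠ ∅ ∧
    ∀ t ∈ TyGlobal A, ∃ t' : Trm, BetaRed t t' ∧ TrmClosed t'

/-- The product type `A ∧ B = ∀X((A → (B → X)) → X)` (X fresh). -/
def tyAnd (A B : Ty) : Ty :=
  .all (.arr (.arr (liftTy 1 0 A) (.arr (liftTy 1 0 B) (.var 0))) (.var 0))

/-- The disjoint sum type `A ∨ B = ∀X((A → X) → ((B → X) → X))` (X fresh). -/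
def tyOr (A B : Ty) : Ty :=
  .all (.arr (.arr (liftTy 1 0 A) (.var 0))
    (.arr (.arr (liftTy 1 0 B) (.var 0)) (.var 0)))

/-- The type `LA = ∀X(X → ((A → (X → X)) → X))` of lists of objects of `A`. -/
def tyList (A : Ty) : Ty :=
  .all (.arr (.var 0)
    (.arr (.arr (liftTy 1 0 A) (.arr (.var 0) (.var 0))) (.var 0)))

/-- Negation `¬A = A → ⊥`. -/
def tyNeg (A : Ty) : Ty := .arr A tyBot

/-- The Gödel translation `A*` : every atomic subformula `R` is replaced
by `¬R`. -/
def godel : Ty → Ty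
  | .var n => .arr (.var n) tyBot
  | .const c => .arr (.const c) tyBot
  | .arr a b => .arr (godel a) (godel b)
  | .all a => .all (godel a)

/-- `T` is a storage operator for the pair of types `(E, S)`. -/
def IsStorageOpPair (T : Trm) (E S : Ty) : Prop :=
  TrmClosed T ∧
    ∀ t : Trm, TypF [] t E →
      ∃ τ τ' : Trm, BetaEq τ τ' ∧ TypF [] τ' S ∧
        ∀ θ : Trm, BetaEq θ t →
          ∀ f : ℕ, ¬ FreeIn f θ → ¬ FreeIn f τ →
            ∃ σ : ℕ → Trm,
              WHRed (.app (.app T θ) (.var f)) (.app (.var f) (msubst σ τ))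

/-- `T` is a storage operator for the type `D`. -/
def IsStorageOp (T : Trm) (D : Ty) : Prop := IsStorageOpPair T D D

/-- The term `λx₁…λxₙ.α` (n-fold abstraction over the free variable `α`). -/
def nlam (n a : ℕ) : Trm := Trm.lam^[n] (Trm.var (a + n))

/-- The term `p_n = λx₁…λxₙλx.x`. -/
def pTrm (n : ℕ) : Trm := Trm.lam^[n] (Trm.lam (Trm.var 0))

/-- `B₁ → … → B_n → A`. -/
def mkArr (Bs : List Ty) (A : Ty) : Ty := Bs.foldr Ty.arr A

/-- The length `Lg(E)` of a type : the number of occurrences of `→` in it. -/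
def Lg : Ty → ℕ
  | .var _ => 0
  | .const _ => 0
  | .arr a b => Lg a + Lg b + 1
  | .all a => Lg a

/-- `SubtypeOf A E` : `A` is a subtype (subformula) of `E`. -/
inductive SubtypeOf : Ty → Ty → Prop
  | refl (A : Ty) : SubtypeOf A A
  | arrL {A B C : Ty} : SubtypeOf A B → SubtypeOf A (.arr B C)
  | arrR {A B C : Ty} : SubtypeOf A C → SubtypeOf A (.arr B C)
  | all {A B : Ty} : SubtypeOf A B → SubtypeOf A (.all B)

/-- `InAppPos k t` : the variable `k` occurs in application (function)
position in `t`, i.e. some subterm of `t` is of the form `(k)u`. -/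
def InAppPos : ℕ → Trm → Prop
  | _, .var _ => False
  | k, .app u v => u = .var k ∨ InAppPos k u ∨ InAppPos k v
  | k, .lam u => InAppPos (k + 1) u

/-- The simple translation `A^s` : `X^s = X`, `(B → C)^s = B^s → C^s`,
`(∀X B)^s = B^s` (the variables freed by erasing the quantifiers are collapsed
onto the type variable `0`). `d` counts the erased quantifiers. -/
def eraseTyAux : ℕ → Ty → Ty
  | d, .var n => .var (n - d)
  | _, .const c => .const c
  | d, .arr a b => .arr (eraseTyAux d a) (eraseTyAux d b)
  | d, .all a => eraseTyAux (d + 1) a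

/-- The simple translation `A^s`. -/
def eraseTy : Ty → Ty := eraseTyAux 0

/-- The identity term `λx.x`. -/
def idTrm : Trm := .lam (.var 0)

/-- The boolean `𝟙 = λxλy.x`. -/
def oneTrm : Trm := .lam (.lam (.var 1))

/-- The pair of λ-terms `(T_F, T'_F)` associated with a type `F` (the
distinguished variable `X` having de Bruijn index `k`; the term variable `α`
is the free term variable `0`):
`T_F = T'_F = λx.x` if `X ∉ Fv(F)`;
`T_X = λxλβλg.(g)xα`, `T'_X = λx.(x)α𝟙`;
`T_{C→D} = λxλy.(T_D)(x)(T'_C)y`, `T'_{C→D} = λxλy.(T'_D)(x)(T_C)y`;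
`T_{∀Y B} = λx.(T_B)x`, `T'_{∀Y B} = λx.(T'_B)x`. -/
def TTpair : ℕ → Ty → Trm × Trm
  | k, .var n =>
      if n = k then
        (.lam (.lam (.lam (.app (.app (.var 0) (.var 2)) (.var 3)))),
         .lam (.app (.app (.var 0) (.var 1)) oneTrm))
      else (idTrm, idTrm)
  | _, .const _ => (idTrm, idTrm)
  | k, .arr C D =>
      if tyFreeInB k (.arr C D) then
        (.lam (.lam (.app (liftTrm 2 0 (TTpair k D).1)
            (.app (.var 1) (.app (liftTrm 2 0 (TTpair k C).2) (.var 0))))),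
         .lam (.lam (.app (liftTrm 2 0 (TTpair k D).2)
            (.app (.var 1) (.app (liftTrm 2 0 (TTpair k C).1) (.var 0))))))
      else (idTrm, idTrm)
  | k, .all B =>
      if tyFreeInB k (.all B) then
        (.lam (.app (liftTrm 1 0 (TTpair (k + 1) B).1) (.var 0)),
         .lam (.app (liftTrm 1 0 (TTpair (k + 1) B).2) (.var 0)))
      else (idTrm, idTrm)


/-! Auxiliary development for Statement 14. -/

lemma nlam_succ (n a : ℕ) : nlam (n + 1) a = .lam (nlam n (a + 1)) := by
  show Trm.lam^[n+1] (Trm.var (a + (n+1))) = .lam (Trm.lam^[n] (Trm.var (a + 1 + n)))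
  rw [show a + (n + 1) = a + 1 + n by omega, Function.iterate_succ_apply']

lemma free_nlam (n β : ℕ) : FreeIn β (nlam n β) := by
  induction n generalizing β with
  | zero => show β = β; rfl
  | succ n ih => rw [nlam_succ]; exact ih (β + 1)

lemma nlam_normal (n β : ℕ) : IsNormal (nlam n β) := by
  induction n generalizing β with
  | zero => intro u h; cases h
  | succ n ih => rw [nlam_succ]; intro u h; cases h with
    | lam h' => exact ih (β + 1) _ h'

lemma lift_nlam (n : ℕ) : ∀ k β, k ≤ β → liftTrm 1 k (nlam n β) = nlam n (β + 1) := by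
  induction n with
  | zero =>
      intro k β hk
      show liftTrm 1 k (.var β) = .var (β + 1)
      simp [liftTrm, Nat.not_lt.mpr hk]
  | succ n ih =>
      intro k β hk
      rw [nlam_succ, nlam_succ]
      show Trm.lam (liftTrm 1 (k+1) (nlam n (β+1))) = _
      rw [ih (k+1) (β+1) (by omega)]

lemma subst_nlam (m : ℕ) : ∀ k β a, k ≤ β → substTrm (nlam m (β + 1)) k a = nlam m β := by
  induction m with
  | zero =>
      intro k β a hk
      show substTrm (.var (β+1)) k a = .var β
      simp only [substTrm, if_neg (show ¬ β + 1 < k by omega),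
        if_neg (show ¬ β + 1 = k by omega)]
      norm_num
  | succ m ih =>
      intro k β a hk
      rw [nlam_succ, nlam_succ]
      show Trm.lam (substTrm (nlam m (β+2)) (k+1) a) = _
      rw [ih (k+1) (β+1) a (by omega)]

/-- Head condition: if `u` is an abstraction then it is a (nonzero) `nlam`
with free variable above `d`. -/
def HeadOk (d : ℕ) (u : Trm) : Prop :=
  ∀ b, u = .lam b → ∃ m β, d ≤ β ∧ u = nlam (m + 1) β

/-- Invariant: every redex in the term has an `nlam`-head pointing above the
`d` enclosing binders. -/
def Good : ℕ → Trm → Prop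
  | _, .var _ => True
  | d, .app u v => Good d u ∧ Good d v ∧ HeadOk d u
  | d, .lam b => Good (d + 1) b

lemma good_nlam (n : ℕ) : ∀ β d, Good d (nlam n β) := by
  induction n with
  | zero => intro β d; trivial
  | succ n ih => intro β d; rw [nlam_succ]; exact ih (β + 1) (d + 1)

lemma headOk_step {d : ℕ} {u u' : Trm} (hg : Good d u) (hh : HeadOk d u)
    (hs : BetaStep u u') : HeadOk d u' := by
  cases hs with
  | beta b a =>
      obtain ⟨_, _, hh'⟩ := hg
      obtain ⟨m, β, hβ, he⟩ := hh' b rfl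
      rw [nlam_succ] at he
      injection he with he'
      intro c hc
      rw [he', subst_nlam m 0 β a (Nat.zero_le β)] at hc ⊢
      cases m with
      | zero => cases hc
      | succ m' => exact ⟨m', β, hβ, rfl⟩
  | appL a h => intro c hc; cases hc
  | appR a h => intro c hc; cases hc
  | lam h =>
      rename_i b b'
      obtain ⟨m, β, hβ, he⟩ := hh b rfl
      have hstep : BetaStep (.lam b) (.lam b') := BetaStep.lam h
      rw [he] at hstep
      exact absurd hstep (nlam_normal (m+1) β _)

lemma good_step {s s' : Trm} (hs : BetaStep s s') :
    ∀ d, Good d s → Good d s' := by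
  induction hs with
  | beta b a =>
      intro d hg
      obtain ⟨hgl, hga, hh⟩ := hg
      obtain ⟨m, β, hβ, he⟩ := hh b rfl
      rw [nlam_succ] at he
      injection he with he'
      rw [he', subst_nlam m 0 β a (Nat.zero_le β)]
      exact good_nlam m β d
  | appL a h ih =>
      intro d hg
      obtain ⟨hu, hv, hh⟩ := hg
      exact ⟨ih d hu, hv, headOk_step hu hh h⟩
  | appR a h ih =>
      intro d hg
      obtain ⟨hu, hv, hh⟩ := hg
      exact ⟨hu, ih d hv, hh⟩
  | lam h ih =>
      intro d hg
      exact ih (d + 1) hg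

lemma free_step {s s' : Trm} (hs : BetaStep s s') :
    ∀ d, Good d s → (∃ k, d ≤ k ∧ FreeIn k s) → ∃ k, d ≤ k ∧ FreeIn k s' := by
  induction hs with
  | beta b a =>
      intro d hg _
      obtain ⟨_, _, hh⟩ := hg
      obtain ⟨m, β, hβ, he⟩ := hh b rfl
      rw [nlam_succ] at he
      injection he with he'
      rw [he', subst_nlam m 0 β a (Nat.zero_le β)]
      exact ⟨β, hβ, free_nlam m β⟩
  | appL a h ih =>
      intro d hg hk
      obtain ⟨hu, hv, hh⟩ := hg
      obtain ⟨k, hdk, hf⟩ := hk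
      cases hf with
      | inl hf =>
          obtain ⟨k', hdk', hf'⟩ := ih d hu ⟨k, hdk, hf⟩
          exact ⟨k', hdk', Or.inl hf'⟩
      | inr hf => exact ⟨k, hdk, Or.inr hf⟩
  | appR a h ih =>
      intro d hg hk
      obtain ⟨hu, hv, hh⟩ := hg
      obtain ⟨k, hdk, hf⟩ := hk
      cases hf with
      | inl hf => exact ⟨k, hdk, Or.inl hf⟩
      | inr hf =>
          obtain ⟨k', hdk', hf'⟩ := ih d hv ⟨k, hdk, hf⟩
          exact ⟨k', hdk', Or.inr hf'⟩
  | lam h ih =>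
      intro d hg hk
      obtain ⟨k, hdk, hf⟩ := hk
      obtain ⟨k', hdk', hf'⟩ := ih (d + 1) hg ⟨k + 1, by omega, hf⟩
      refine ⟨k' - 1, by omega, ?_⟩
      show FreeIn (k' - 1 + 1) _
      have : k' - 1 + 1 = k' := by omega
      rw [this]; exact hf'

lemma normal_app {a b : Trm} (h : IsNormal (.app a b)) :
    IsNormal a ∧ IsNormal b ∧ ∀ c, a ≠ .lam c := by
  refine ⟨fun u hu => h _ (BetaStep.appL b hu),
          fun u hu => h _ (BetaStep.appR a hu), fun c hc => ?_⟩
  subst hc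
  exact h _ (BetaStep.beta c b)

lemma normal_lam {a : Trm} (h : IsNormal (.lam a)) : IsNormal a :=
  fun u hu => h _ (BetaStep.lam hu)

lemma free_replace {t : Trm} : ∀ {x n β : ℕ}, FreeIn x t →
    FreeIn β (replaceVar t x (nlam n β)) := by
  induction t with
  | var m =>
      intro x n β hx
      have : m = x := hx
      simp only [replaceVar, if_pos this]
      exact free_nlam n β
  | app a b iha ihb =>
      intro x n β hx
      cases hx with
      | inl hf => exact Or.inl (iha hf)
      | inr hf => exact Or.inr (ihb hf)
  | lam a ih =>
      intro x n β hx
      show FreeIn (β + 1) (replaceVar a (x+1) (liftTrm 1 0 (nlam n β)))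
      rw [lift_nlam n 0 β (Nat.zero_le β)]
      exact ih hx

lemma good_replace {t : Trm} : ∀ {x n β d : ℕ}, IsNormal t → d ≤ β →
    Good d (replaceVar t x (nlam n β)) := by
  induction t with
  | var m =>
      intro x n β d _ hd
      show Good d (if m = x then nlam n β else .var m)
      split
      · exact good_nlam n β d
      · trivial
  | app a b iha ihb =>
      intro x n β d hn hd
      obtain ⟨ha, hb, hnl⟩ := normal_app hn
      refine ⟨iha ha hd, ihb hb hd, ?_⟩
      intro c hc
      cases a with
      | var m =>
          by_cases hm : m = x
          · simp only [replaceVar, if_pos hm] at hc ⊢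
            cases n with
            | zero => cases hc
            | succ n' => exact ⟨n', β, hd, rfl⟩
          · simp only [replaceVar, if_neg hm] at hc
            cases hc
      | app a1 a2 => cases hc
      | lam a' => exact absurd rfl (hnl a')
  | lam a ih =>
      intro x n β d hn hd
      show Good (d + 1) (replaceVar a (x+1) (liftTrm 1 0 (nlam n β)))
      rw [lift_nlam n 0 β (Nat.zero_le β)]
      exact ih (normal_lam hn) (by omega)


/-- if `t` is normal, `v` is closed and
`t[λx₁…λxₙ.α / x] →β v`, then `x ∉ Fv(t)`. -/
theorem not_free_if_reduces_to_closed (t v : Trm) (α x n : ℕ)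
    (ht : IsNormal t) (hv : TrmClosed v)
    (h : BetaRed (replaceVar t x (nlam n α)) v) : ¬ FreeIn x t := by
  intro hx
  have key : ∀ w, BetaRed (replaceVar t x (nlam n α)) w →
      Good 0 w ∧ ∃ k, 0 ≤ k ∧ FreeIn k w := by
    intro w hw
    induction hw with
    | refl => exact ⟨good_replace ht (Nat.zero_le α), α, Nat.zero_le α, free_replace hx⟩
    | tail hab hbc ih => exact ⟨good_step hbc 0 ih.1, free_step hbc 0 ih.1 ih.2⟩
  obtain ⟨_, k, _, hk⟩ := key v h
  exact hv k hk

end FarkhNour
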